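/- Let f : X → ℝ be L-Lipschitz on a metric space X on which a group G acts, with the action L_G-Lipschitz in the group variable: d(g·x, h·x) ≤ L_G d_G(g,h) for all x, g, h. Suppose f is invariant under a subgroup H, and let ρ be a probability measure supported on G' ∩ U for another subgroup G' and compact set U. Then |∫ f(g·x) dρ(g) − f(x)| ≤ L · L_G · d_Haus(G' ∩ U, H ∩ U), where d_Haus is the Hausdorff distance in (G, d_G). -/

import Mathlib

/-! The orbit map `g ↦ f (g • x)` is `L * LG`-Lipschitz and equals `f x` on `H`, so on `G' ∩ U`
it stays within `L * LG` times the Hausdorff distance of `f x`; averaging over `ρ`, which lives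
on `G' ∩ U`, keeps the bound. -/

open MeasureTheory Metric

section Lipschitz

variable {α β : Type*} [PseudoMetricSpace α] [PseudoMetricSpace β] {K : NNReal} {φ : α → β}
  {S T : Set α} {c : β}

theorem LipschitzWith.dist_le_mul_infDist (hφ : LipschitzWith K φ) (hT : T.Nonempty)
    (hc : ∀ y ∈ T, φ y = c) (x : α) : dist (φ x) c ≤ K * infDist x T := by
  have : Nonempty T := hT.to_subtype
  rw [infDist_eq_iInf, Real.mul_iInf_of_nonneg K.coe_nonneg]
  exact le_ciInf fun y => hc y y.2 ▸ hφ.dist_le_mul x y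

theorem LipschitzWith.dist_le_mul_hausdorffDist (hφ : LipschitzWith K φ)
    (hc : ∀ y ∈ T, φ y = c) (hST : hausdorffEDist S T ≠ ⊤) {x : α} (hx : x ∈ S) :
    dist (φ x) c ≤ K * hausdorffDist S T :=
  (hφ.dist_le_mul_infDist (nonempty_of_hausdorffEDist_ne_top ⟨x, hx⟩ hST) hc x).trans <|
    mul_le_mul_of_nonneg_left (infDist_le_hausdorffDist_of_mem hx hST) K.coe_nonneg

end Lipschitz

theorem dist_integral_le_of_ae_dist_le {α E : Type*} [MeasurableSpace α] [NormedAddCommGroup E]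
    [NormedSpace ℝ E] [CompleteSpace E] {μ : Measure α} [IsProbabilityMeasure μ] {φ : α → E}
    (hφ : AEStronglyMeasurable φ μ) {c : E} {B : ℝ} (h : ∀ᵐ a ∂μ, dist (φ a) c ≤ B) :
    dist (∫ a, φ a ∂μ) c ≤ B := by
  have h' : ∀ᵐ a ∂μ, ‖φ a - c‖ ≤ B := by simpa only [dist_eq_norm] using h
  have hint : Integrable (fun a => φ a - c) μ :=
    Integrable.of_bound (hφ.sub aestronglyMeasurable_const) B h'
  have hφint : Integrable φ μ :=
    (hint.add (integrable_const c)).congr (ae_of_all _ fun a => sub_add_cancel (φ a) c)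
  calc dist (∫ a, φ a ∂μ) c = ‖∫ a, (φ a - c) ∂μ‖ := by
        rw [integral_sub hφint (integrable_const c), integral_const, dist_eq_norm]
        simp
    _ ≤ B * μ.real Set.univ := norm_integral_le_of_norm_le_const h'
    _ = B := by simp

theorem close_groups_bias_bound (G X : Type*) [Group G] [MetricSpace G]
    [MeasurableSpace G] [BorelSpace G] [MetricSpace X] [MulAction G X]
    (L LG : ℝ) (hL : 0 ≤ L) (hLG : 0 ≤ LG)
    (f : X → ℝ) (hf : ∀ x y : X, |f x - f y| ≤ L * dist x y)
    (hlip : ∀ (x : X) (g h : G), dist (g • x) (h • x) ≤ LG * dist g h)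
    (H G' : Subgroup G) (U : Set G) (hU : IsCompact U) (hone : (1 : G) ∈ U)
    (hinv : ∀ h ∈ H, ∀ x : X, f (h • x) = f x)
    (ρ : Measure G) [IsProbabilityMeasure ρ]
    (hsupp : ρ (((G' : Set G) ∩ U)ᶜ) = 0) :
    ∀ x : X,
      |(∫ g, f (g • x) ∂ρ) - f x| ≤
        L * LG * Metric.hausdorffDist ((G' : Set G) ∩ U) ((H : Set G) ∩ U) := by
  intro x
  have hφ : LipschitzWith (L * LG).toNNReal fun g : G => f (g • x) :=
    LipschitzWith.of_dist_le' fun g h => calc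
      dist (f (g • x)) (f (h • x)) ≤ L * dist (g • x) (h • x) := hf _ _
      _ ≤ L * (LG * dist g h) := by gcongr; exact hlip x g h
      _ = L * LG * dist g h := by ring
  have hone_mem (K : Subgroup G) : (1 : G) ∈ (K : Set G) ∩ U := ⟨K.one_mem, hone⟩
  have hST : hausdorffEDist ((G' : Set G) ∩ U) ((H : Set G) ∩ U) ≠ ⊤ :=
    hausdorffEDist_ne_top_of_nonempty_of_bounded ⟨1, hone_mem G'⟩ ⟨1, hone_mem H⟩
      (hU.isBounded.subset Set.inter_subset_right) (hU.isBounded.subset Set.inter_subset_right)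
  have hbound : ∀ᵐ g ∂ρ, dist (f (g • x)) (f x) ≤
      L * LG * hausdorffDist ((G' : Set G) ∩ U) ((H : Set G) ∩ U) := by
    filter_upwards [mem_ae_iff.2 hsupp] with g hg
    rw [← Real.coe_toNNReal _ (mul_nonneg hL hLG)]
    exact hφ.dist_le_mul_hausdorffDist (fun h hh => hinv h hh.1 x) hST hg
  simpa only [Real.dist_eq] using
    dist_integral_le_of_ae_dist_le hφ.continuous.aestronglyMeasurable hbound
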